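/- arXiv:1909.04274 — 2 statements merged into one kernel-verified Lean document; each statement's English description precedes it below -/
import Mathlib

section
/- Let (A, B, W) be a partition of V = {0,1}^n with μ(A) = 1/2 and β = log₂(3/2). Then |∇(A,B)| + n^β |W| ≥ 2^{n−1}. -/
open Finset

noncomputable def β : ℝ := Real.logb 2 (3/2)

def flipC {n : ℕ} (x : Fin n → Bool) (i : Fin n) : Fin n → Bool :=
  Function.update x i (!x i)

def nabla {n : ℕ} (A B : Finset (Fin n → Bool)) : ℕ :=
  ∑ x ∈ A, (univ.filter (fun i => flipC x i ∈ B)).card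

noncomputable section CubeSeparationProof

section NumFacts

lemma beta_pos : 0 < β := Real.logb_pos (by norm_num) (by norm_num)

lemma beta_le_one : β ≤ 1 := by
  rw [β, Real.logb_le_iff_le_rpow (by norm_num) (by norm_num), Real.rpow_one]; norm_num

lemma two_rpow_beta : (2:ℝ) ^ β = 3/2 :=
  Real.rpow_logb (by norm_num) (by norm_num) (by norm_num)

private lemma rpow_cert_ge {b : ℝ} (hb : 0 ≤ b) {p q : ℕ} {c : ℝ} (hc : 0 ≤ c) (hq : 0 < q)
    (h : c ^ q ≤ b ^ p) : c ≤ b ^ ((p:ℝ)/q) := by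
  have h2 : (b ^ ((p:ℝ)/q)) ^ (q:ℕ) = b ^ p := by
    rw [← Real.rpow_natCast (b ^ ((p:ℝ)/q)) q, ← Real.rpow_mul hb,
      div_mul_cancel₀ _ (by exact_mod_cast hq.ne' : (q:ℝ) ≠ 0), Real.rpow_natCast]
  exact le_of_pow_le_pow_left₀ hq.ne' (Real.rpow_nonneg hb _) (by rw [h2]; exact h)

private lemma rpow_cert_le {b : ℝ} (hb : 0 ≤ b) {p q : ℕ} {c : ℝ} (hc : 0 ≤ c) (hq : 0 < q)
    (h : b ^ p ≤ c ^ q) : b ^ ((p:ℝ)/q) ≤ c := by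
  have h2 : (b ^ ((p:ℝ)/q)) ^ (q:ℕ) = b ^ p := by
    rw [← Real.rpow_natCast (b ^ ((p:ℝ)/q)) q, ← Real.rpow_mul hb,
      div_mul_cancel₀ _ (by exact_mod_cast hq.ne' : (q:ℝ) ≠ 0), Real.rpow_natCast]
  exact le_of_pow_le_pow_left₀ hq.ne' hc (by rw [h2]; exact h)

lemma beta_ge : (7:ℝ)/12 ≤ β := by
  rw [β, Real.le_logb_iff_rpow_le (by norm_num) (by norm_num)]
  exact_mod_cast rpow_cert_le (by norm_num : (0:ℝ) ≤ 2) (by norm_num : (0:ℝ) ≤ 3/2)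
    (by norm_num) (by norm_num : (2:ℝ)^(7:ℕ) ≤ ((3:ℝ)/2)^(12:ℕ))

lemma beta_le : β ≤ (3:ℝ)/5 := by
  rw [β, Real.logb_le_iff_le_rpow (by norm_num) (by norm_num)]
  exact_mod_cast rpow_cert_ge (by norm_num : (0:ℝ) ≤ 2) (by norm_num : (0:ℝ) ≤ 3/2)
    (by norm_num) (by norm_num : ((3:ℝ)/2)^(5:ℕ) ≤ (2:ℝ)^(3:ℕ))

lemma three_beta_ge : (11:ℝ)/6 ≤ (3:ℝ) ^ β := by
  have h1 : (11:ℝ)/6 ≤ (3:ℝ) ^ ((7:ℝ)/12) :=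
    rpow_cert_ge (by norm_num) (by norm_num) (by norm_num)
      (by norm_num : ((11:ℝ)/6)^(12:ℕ) ≤ (3:ℝ)^(7:ℕ))
  exact h1.trans (Real.rpow_le_rpow_of_exponent_le (by norm_num) beta_ge)

lemma three_beta_le : (3:ℝ) ^ β ≤ 5/2 := by
  have h1 : (3:ℝ) ^ ((3:ℝ)/5) ≤ 5/2 :=
    rpow_cert_le (by norm_num) (by norm_num) (by norm_num)
      (by norm_num : (3:ℝ)^(3:ℕ) ≤ ((5:ℝ)/2)^(5:ℕ))
  exact (Real.rpow_le_rpow_of_exponent_le (by norm_num) beta_le).trans h1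

lemma four_rpow_beta : (4:ℝ) ^ β = 9/4 := by
  have h1 : ((2:ℝ) ^ (2:ℝ)) = 4 := by
    rw [show (2:ℝ)^(2:ℝ) = (2:ℝ)^(2:ℕ) from by rw [← Real.rpow_natCast]; norm_num]
    norm_num
  have h2 : (4:ℝ) ^ β = (2:ℝ) ^ ((2:ℝ)*β) := by
    rw [Real.rpow_mul (by norm_num), h1]
  rw [h2, mul_comm, Real.rpow_mul (by norm_num), two_rpow_beta,
    show ((3:ℝ)/2) ^ (2:ℝ) = ((3:ℝ)/2)^(2:ℕ) from by rw [← Real.rpow_natCast]; norm_num]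
  norm_num

lemma four_sixth : (5:ℝ)/4 ≤ (4:ℝ) ^ ((1:ℝ)/6) := by
  have h := rpow_cert_ge (b:=(4:ℝ)) (p:=1) (q:=6) (by norm_num) (c:=(5:ℝ)/4) (by norm_num)
    (by norm_num) (by norm_num)
  push_cast at h
  exact h

end NumFacts


def dlt (t : ℕ) : ℝ := ((t:ℝ)+1)^β - (t:ℝ)^β

lemma zero_rpow_beta : (0:ℝ)^β = 0 := Real.zero_rpow beta_pos.ne'

lemma one_le_rpow_beta {T : ℝ} (h : 1 ≤ T) : 1 ≤ T ^ β := by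
  calc (1:ℝ) = T ^ (0:ℝ) := (Real.rpow_zero T).symm
  _ ≤ T ^ β := Real.rpow_le_rpow_of_exponent_le h beta_pos.le

lemma dlt_nonneg (t : ℕ) : 0 ≤ dlt t :=
  sub_nonneg.2 (Real.rpow_le_rpow (by positivity) (by linarith) beta_pos.le)

lemma dlt_zero : dlt 0 = 1 := by
  simp [dlt, zero_rpow_beta]

-- Key: AM-GM tangent bound  r^β ≤ β r + (1-β)  for r ≥ 0
lemma amgm_tangent {r : ℝ} (hr : 0 ≤ r) : r ^ β ≤ β * r + (1 - β) := by
  have h := Real.geom_mean_le_arith_mean2_weighted beta_pos.le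
    (by linarith [beta_le_one] : (0:ℝ) ≤ 1 - β) hr (by norm_num : (0:ℝ) ≤ 1)
    (by ring)
  rw [Real.one_rpow] at h
  linarith

-- NUM1 : 1 ≤ 2 t^β ((t+1)^β - t^β) for t ≥ 1
lemma num1 {t : ℕ} (ht : 1 ≤ t) : 1 ≤ 2 * (t:ℝ)^β * dlt t := by
  rcases eq_or_lt_of_le ht with h1 | h2
  · -- t = 1
    subst h1
    have hd : dlt 1 = 1/2 := by
      rw [dlt]
      push_cast
      rw [show (1:ℝ)+1 = 2 by norm_num, two_rpow_beta, Real.one_rpow]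
      norm_num
    rw [hd]
    push_cast
    rw [Real.one_rpow]
    norm_num
  rcases eq_or_lt_of_le (Nat.succ_le_of_lt h2) with h2' | h3
  · -- t = 2
    rw [← h2']
    have hd : dlt 2 = 3^β - 3/2 := by
      rw [dlt]
      push_cast
      rw [show (2:ℝ)+1 = 3 by norm_num, two_rpow_beta]
    rw [hd]
    push_cast
    rw [two_rpow_beta]
    nlinarith [three_beta_ge]
  · -- t ≥ 3
    have ht3 : (3:ℝ) ≤ (t:ℝ) := by exact_mod_cast h3
    set T : ℝ := (t:ℝ) with hT
    have hT0 : 0 < T := by linarith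
    set U : ℝ := T + 1 with hU
    have hU0 : (0:ℝ) < U := by linarith
    have hU4 : (4:ℝ) ≤ U := by linarith
    have hr0 : (0:ℝ) ≤ T/U := by positivity
    -- T^β = U^β (T/U)^β
    have hsplit : T ^ β = U ^ β * (T/U) ^ β := by
      rw [← Real.mul_rpow hU0.le hr0, mul_div_cancel₀ _ hU0.ne']
    -- dlt t ≥ β U^β / U
    have hdlt : β * (U ^ β / U) ≤ dlt t := by
      have htan := amgm_tangent hr0
      have hUT : U - T = 1 := by rw [hU]; ring
      have h1r : 1 - T/U = 1/U := by
        field_simp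
        linarith
      have : dlt t = U ^ β * (1 - (T/U)^β) := by
        rw [dlt, ← hU, hsplit]; ring
      rw [this]
      have h2 : β * (1/U) ≤ 1 - (T/U)^β := by
        have : β * (1 - T/U) ≤ 1 - (T/U)^β := by nlinarith
        rwa [h1r] at this
      calc β * (U^β/U) = U^β * (β * (1/U)) := by ring
      _ ≤ U^β * (1 - (T/U)^β) :=
          mul_le_mul_of_nonneg_left h2 (Real.rpow_nonneg hU0.le _)
    -- main chain
    have hTb : (3/4:ℝ)^β * U^β ≤ T^β := by
      rw [← Real.mul_rpow (by norm_num) hU0.le]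
      apply Real.rpow_le_rpow (by positivity) (by linarith) beta_pos.le
    -- (U^β)^2 ≥ U * 4^(1/6)
    have hUb : U * (4:ℝ)^((1:ℝ)/6) ≤ U^β * U^β := by
      have h712 : U ^ ((7:ℝ)/12) ≤ U ^ β :=
        Real.rpow_le_rpow_of_exponent_le (by linarith) beta_ge
      have hx : U ^ ((7:ℝ)/12) * U ^ ((7:ℝ)/12) = U ^ ((7:ℝ)/6) := by
        rw [← Real.rpow_add hU0]; norm_num
      have hy : U ^ ((7:ℝ)/6) = U * U ^ ((1:ℝ)/6) := by
        rw [show (7:ℝ)/6 = 1 + 1/6 by norm_num, Real.rpow_add hU0, Real.rpow_one]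
      have hz : (4:ℝ)^((1:ℝ)/6) ≤ U ^ ((1:ℝ)/6) :=
        Real.rpow_le_rpow (by norm_num) hU4 (by norm_num)
      have h0 : (0:ℝ) ≤ U ^ ((7:ℝ)/12) := Real.rpow_nonneg hU0.le _
      calc U * (4:ℝ)^((1:ℝ)/6) ≤ U * U^((1:ℝ)/6) := by
            apply mul_le_mul_of_nonneg_left hz hU0.le
      _ = U ^ ((7:ℝ)/6) := hy.symm
      _ = U ^ ((7:ℝ)/12) * U ^ ((7:ℝ)/12) := hx.symm
      _ ≤ U^β * U^β := by
            apply mul_le_mul h712 h712 h0 (Real.rpow_nonneg hU0.le _)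
    -- put together: 2 T^β dlt ≥ 2 (3/4)^β U^β · β U^β/U ≥ 2β(3/4)^β·4^(1/6)
    have hfinal : 1 ≤ 2 * ((3/4:ℝ)^β * U^β) * (β * (U^β/U)) := by
      have expand : 2 * ((3/4:ℝ)^β * U^β) * (β * (U^β/U))
          = 2 * β * (3/4:ℝ)^β * ((U^β * U^β) / U) := by ring
      rw [expand]
      have h34 : (22:ℝ)/27 ≤ (3/4:ℝ)^β := by
        rw [show ((3:ℝ)/4) ^ β = (3:ℝ)^β / (4:ℝ)^β from
          Real.div_rpow (by norm_num) (by norm_num) β, four_rpow_beta]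
        nlinarith [three_beta_ge]
      have hUU : (4:ℝ)^((1:ℝ)/6) ≤ (U^β * U^β)/U := by
        rw [le_div_iff₀ hU0]
        calc (4:ℝ)^((1:ℝ)/6) * U = U * (4:ℝ)^((1:ℝ)/6) := by ring
        _ ≤ U^β * U^β := hUb
      have h46 : (5:ℝ)/4 ≤ (4:ℝ)^((1:ℝ)/6) := four_sixth
      have hq : (5:ℝ)/4 ≤ (U^β * U^β)/U := le_trans h46 hUU
      have s1 : (22:ℝ)/27 * (5/4) ≤ (3/4:ℝ)^β * ((U^β*U^β)/U) :=
        mul_le_mul h34 hq (by norm_num) (Real.rpow_nonneg (by norm_num) _)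
      have s2 : (7:ℝ)/12 * ((22:ℝ)/27 * (5/4)) ≤ β * ((3/4:ℝ)^β * ((U^β*U^β)/U)) :=
        mul_le_mul beta_ge s1 (by norm_num) beta_pos.le
      nlinarith [s2]
    calc (1:ℝ) ≤ 2 * ((3/4:ℝ)^β * U^β) * (β * (U^β/U)) := hfinal
    _ ≤ 2 * T^β * dlt t := by
        apply mul_le_mul
        · linarith [hTb]
        · exact hdlt
        · exact mul_nonneg beta_pos.le (by positivity)
        · positivity

-- PP2 : 2 ≤ dlt t + (t+1)^β  (= 2(t+1)^β - t^β)
lemma pp2 (t : ℕ) : 2 ≤ dlt t + ((t:ℝ)+1)^β := by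
  have key : dlt t + ((t:ℝ)+1)^β = 2*((t:ℝ)+1)^β - (t:ℝ)^β := by rw [dlt]; ring
  rw [key]
  match t with
  | 0 =>
    push_cast
    rw [zero_rpow_beta, show (0:ℝ)+1 = 1 by norm_num, Real.one_rpow]
    norm_num
  | 1 =>
    push_cast
    rw [show (1:ℝ)+1 = 2 by norm_num, two_rpow_beta, Real.one_rpow]
    norm_num
  | 2 =>
    push_cast
    rw [show (2:ℝ)+1 = 3 by norm_num, two_rpow_beta]
    nlinarith [three_beta_ge]
  | 3 =>
    push_cast
    rw [show (3:ℝ)+1 = 4 by norm_num, four_rpow_beta]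
    nlinarith [three_beta_le]
  | (n+4) =>
    push_cast
    have h2 : ((n:ℝ)+4)^β ≤ ((n:ℝ)+4+1)^β :=
      Real.rpow_le_rpow (by positivity) (by linarith) beta_pos.le
    have h3 : (4:ℝ)^β ≤ ((n:ℝ)+4)^β :=
      Real.rpow_le_rpow (by norm_num) (by linarith) beta_pos.le
    rw [four_rpow_beta] at h3
    nlinarith


-- PP1 : 2x ≤ dlt t + 2 x² t^β   for 0 ≤ x ≤ 1/2
lemma pp1 (t : ℕ) {x : ℝ} (hx0 : 0 ≤ x) (hx : x ≤ 1/2) :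
    2*x ≤ dlt t + 2*x^2*(t:ℝ)^β := by
  rcases Nat.eq_zero_or_pos t with h0 | h1
  · subst h0
    rw [dlt_zero]
    push_cast
    rw [zero_rpow_beta]
    nlinarith
  · have hu : 1 ≤ (t:ℝ)^β := one_le_rpow_beta (by exact_mod_cast h1)
    have hn := num1 h1
    nlinarith [sq_nonneg (2*(t:ℝ)^β*x - 1), dlt_nonneg t, sq_nonneg x]

/-- The CORE inequality. -/
lemma core {ι : Type*} [DecidableEq ι] (K : Finset ι) (f : ι → ℕ) {M a : ℝ}
    (hM : 0 < M) (ha : 0 ≤ a) (hka : a + K.card ≤ M) :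
    (K.card:ℝ)^2 / M ≤
      max (∑ y ∈ K, dlt (f y)) (∑ y ∈ K, ((f y:ℝ)+1)^β - 2*a*(M-a)/M) := by
  set k : ℝ := (K.card:ℝ) with hk
  have hk0 : 0 ≤ k := by positivity
  have hkM : k ≤ M := by
    have : a + k ≤ M := hka
    linarith
  have hphi0 : 0 ≤ 2*a*(M-a)/M := by
    apply div_nonneg _ hM.le
    nlinarith
  set φ : ℝ := 2*a*(M-a)/M with hφ
  have hsum : ∑ y ∈ K, ((f y:ℝ)+1)^β
      = (∑ y ∈ K, ((f y:ℝ))^β) + ∑ y ∈ K, dlt (f y) := by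
    rw [← Finset.sum_add_distrib]
    apply Finset.sum_congr rfl
    intro y _
    rw [dlt]; ring
  set S : ℝ := ∑ y ∈ K, ((f y:ℝ))^β with hS
  set G : ℝ := ∑ y ∈ K, dlt (f y) with hG
  have hG0 : 0 ≤ G := Finset.sum_nonneg (fun y _ => dlt_nonneg _)
  have hS0 : 0 ≤ S := Finset.sum_nonneg (fun y _ => Real.rpow_nonneg (by positivity) _)
  rcases le_or_gt k (M/2) with hhalf | hhalf
  · -- small k : use PP1 with x = k/M
    set x : ℝ := k/M with hx
    have hx0 : 0 ≤ x := by positivity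
    have hx2 : x ≤ 1/2 := by
      rw [hx, div_le_iff₀ hM]; linarith
    have hpp : ∀ y ∈ K, 2*x ≤ dlt (f y) + 2*x^2*((f y:ℝ))^β :=
      fun y _ => pp1 (f y) hx0 hx2
    have hsum2 : 2*x*k ≤ G + 2*x^2*S := by
      have := Finset.sum_le_sum hpp
      simp only [Finset.sum_add_distrib, Finset.sum_const, nsmul_eq_mul, ← Finset.mul_sum] at this
      rw [hG, hS]
      calc 2*x*k = K.card * (2*x) := by rw [hk]; ring
      _ ≤ _ := by exact_mod_cast this
      _ = _ := by ring
    -- φ ≤ M/2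
    have hphiM : φ ≤ M/2 := by
      rw [hφ, div_le_iff₀ hM]
      nlinarith [sq_nonneg (M - 2*a)]
    have hgoal : k^2/M = 2*x*k - x^2*M := by
      rw [hx]; field_simp; ring
    rcases le_or_gt S φ with hcase | hcase
    · -- G is big
      apply le_max_of_le_left
      have : 2*x^2*S ≤ 2*x^2*φ := by nlinarith [sq_nonneg x]
      have h2 : 2*x*k - 2*x^2*φ ≤ G := by linarith
      have h4 : 2*x^2*φ ≤ x^2*M := by nlinarith [sq_nonneg x]
      linarith [hgoal]
    · -- S+G-φ is big
      apply le_max_of_le_right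
      have h2 : (1 - 2*x^2) * φ ≤ (1 - 2*x^2) * S := by
        apply mul_le_mul_of_nonneg_left hcase.le
        nlinarith
      have h4 : 2*x^2*φ ≤ x^2*M := by nlinarith [sq_nonneg x]
      rw [hsum]
      linarith [hgoal]
  · -- large k : use PP2, φ ≤ 2 k (M-k)/M, and max ≥ average
    have hpp : ∀ y ∈ K, 2 ≤ dlt (f y) + ((f y:ℝ)+1)^β := fun y _ => pp2 (f y)
    have hsum2 : 2*k ≤ G + ∑ y ∈ K, ((f y:ℝ)+1)^β := by
      have := Finset.sum_le_sum hpp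
      simp only [Finset.sum_add_distrib, Finset.sum_const, nsmul_eq_mul] at this
      rw [hG]
      calc 2*k = K.card * 2 := by rw [hk]; ring
      _ ≤ _ := by exact_mod_cast this
    have hphik : φ ≤ 2*k*(M-k)/M := by
      rw [hφ, div_le_div_iff₀ hM hM]
      nlinarith [mul_nonneg (by linarith : (0:ℝ) ≤ k - a) (by linarith : (0:ℝ) ≤ M - k - a), hM.le]
    rw [hsum] at hsum2 ⊢
    have h2max : G + (S + G - φ) ≤ max G (S + G - φ) + max G (S + G - φ) :=
      add_le_add (le_max_left _ _) (le_max_right _ _)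
    have hid : k^2/M = k - k*(M-k)/M := by field_simp; ring
    have hphik' : φ ≤ 2*(k*(M-k)/M) := by
      have : 2*k*(M-k)/M = 2*(k*(M-k)/M) := by ring
      linarith [hphik, this.symm.le, this.le]
    have h5 : k*(M-k)/M - φ/2 ≥ 0 := by linarith
    linarith


variable {n : ℕ}

def deg (A : Finset (Fin n → Bool)) (x : Fin n → Bool) : ℕ :=
  (univ.filter (fun i => flipC x i ∈ A)).card

lemma flipC_flip (x : Fin n → Bool) (i : Fin n) : flipC (flipC x i) i = x := by
  funext j
  simp only [flipC, Function.update_apply]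
  by_cases h : j = i <;> simp [h]

lemma deg_le (A : Finset (Fin n → Bool)) (x : Fin n → Bool) : deg A x ≤ n := by
  calc deg A x ≤ (univ : Finset (Fin n)).card := card_filter_le _ _
  _ = n := by simp

def half (A : Finset (Fin (n+1) → Bool)) (b : Bool) : Finset (Fin n → Bool) :=
  univ.filter (fun y => Fin.cons b y ∈ A)

lemma mem_half {A : Finset (Fin (n+1) → Bool)} {b : Bool} {y : Fin n → Bool} :
    y ∈ half A b ↔ Fin.cons b y ∈ A := by simp [half]

lemma flip_cons_zero (b : Bool) (y : Fin n → Bool) :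
    flipC (Fin.cons b y) 0 = Fin.cons (!b) y := by
  simp only [flipC, Fin.cons_zero]
  exact Fin.update_cons_zero (α := fun _ => Bool) b y (!b)

lemma flip_cons_succ (b : Bool) (y : Fin n → Bool) (j : Fin n) :
    flipC (Fin.cons b y) j.succ = Fin.cons b (flipC y j) := by
  simp only [flipC, Fin.cons_succ]
  exact (Fin.cons_update (α := fun _ => Bool) b y j (!(y j))).symm

lemma deg_cons (A : Finset (Fin (n+1) → Bool)) (b : Bool) (y : Fin n → Bool) :
    deg A (Fin.cons b y) = (if y ∈ half A (!b) then 1 else 0) + deg (half A b) y := by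
  unfold deg
  rw [card_filter, card_filter, Fin.sum_univ_succ]
  congr 1
  · rw [flip_cons_zero]
    simp [mem_half]
  · apply Finset.sum_congr rfl
    intro j _
    rw [flip_cons_succ]
    simp [mem_half]

lemma sum_cons_split (F : (Fin (n+1) → Bool) → ℝ) :
    ∑ x : Fin (n+1) → Bool, F x
      = (∑ y : Fin n → Bool, F (Fin.cons false y)) + ∑ y : Fin n → Bool, F (Fin.cons true y) := by
  rw [← (Fin.consEquiv (fun _ => Bool)).sum_comp F]
  rw [Fintype.sum_prod_type]
  rw [Fintype.sum_bool]
  simp only [Fin.consEquiv]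
  rw [add_comm]
  rfl


/-- boundary energy -/
def P (A : Finset (Fin n → Bool)) : ℝ := ∑ x ∈ univ \ A, ((deg A x:ℝ))^β

lemma sum_sdiff_ite (A : Finset (Fin n → Bool)) (F : (Fin n → Bool) → ℝ) :
    ∑ x ∈ univ \ A, F x = ∑ x : Fin n → Bool, if x ∉ A then F x else 0 := by
  rw [sdiff_eq_filter, sum_filter]

/-- One half of the key split. -/
lemma half_split (A : Finset (Fin (n+1) → Bool)) (b : Bool) :
    ∑ y : Fin n → Bool, (if y ∉ half A b then ((deg A (Fin.cons b y):ℝ))^β else 0)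
      = P (half A b) + ∑ y ∈ (half A (!b)) \ (half A b), dlt (deg (half A b) y) := by
  have key : ∀ y : Fin n → Bool,
      (if y ∉ half A b then ((deg A (Fin.cons b y):ℝ))^β else 0)
        = (if y ∉ half A b then ((deg (half A b) y:ℝ))^β else 0)
          + (if y ∈ (half A (!b)) \ (half A b) then dlt (deg (half A b) y) else 0) := by
    intro y
    rw [deg_cons]
    by_cases h1 : y ∈ half A b
    · simp [h1]
    · by_cases h2 : y ∈ half A (!b)
      · simp only [h1, h2, mem_sdiff, if_true, if_neg h1, not_false_iff, and_true, if_pos]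
        rw [dlt]
        push_cast
        ring
      · simp only [h1, h2, mem_sdiff, if_false, if_neg h2, not_false_iff, false_and]
        simp
  rw [Finset.sum_congr rfl (fun y _ => key y), Finset.sum_add_distrib]
  congr 1
  · rw [P, sum_sdiff_ite]
  · rw [← Finset.sum_filter]
    congr 1
    ext y
    simp [mem_sdiff]

lemma P_split (A : Finset (Fin (n+1) → Bool)) :
    P A = P (half A false) + P (half A true)
      + ∑ y ∈ (half A true) \ (half A false), dlt (deg (half A false) y)
      + ∑ y ∈ (half A false) \ (half A true), dlt (deg (half A true) y) := by
  rw [P, sum_sdiff_ite, sum_cons_split (fun x => if x ∉ A then ((deg A x:ℝ))^β else 0)]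
  have hf : ∀ (b : Bool) (y : Fin n → Bool), (Fin.cons b y ∉ A) = (y ∉ half A b) := by
    intro b y
    simp [mem_half]
  have hs0 := half_split A false
  have hs1 := half_split A true
  simp only [Bool.not_false, Bool.not_true] at hs0 hs1
  have h1 : (∑ y : Fin n → Bool, if Fin.cons false y ∉ A then ((deg A (Fin.cons false y):ℝ))^β else 0)
      = P (half A false) + ∑ y ∈ (half A true) \ (half A false), dlt (deg (half A false) y) := by
    rw [← hs0]
    apply Finset.sum_congr rfl
    intro y _
    exact if_congr (by simp [mem_half]) rfl rfl
  have h2 : (∑ y : Fin n → Bool, if Fin.cons true y ∉ A then ((deg A (Fin.cons true y):ℝ))^β else 0)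
      = P (half A true) + ∑ y ∈ (half A false) \ (half A true), dlt (deg (half A true) y) := by
    rw [← hs1]
    apply Finset.sum_congr rfl
    intro y _
    exact if_congr (by simp [mem_half]) rfl rfl
  rw [h1, h2]
  ring

lemma card_univ_bool : (univ : Finset (Fin n → Bool)).card = 2^n := by
  simp [card_univ]

/-- The key inductive step bound, stated for an ordered pair of halves. -/
lemma keystep (C D : Finset (Fin n → Bool)) (hcd : C.card ≤ D.card)
    (hC : 2*(C.card:ℝ)*((2^n:ℝ) - C.card)/(2^n:ℝ) ≤ P C)
    (hD : 2*(D.card:ℝ)*((2^n:ℝ) - D.card)/(2^n:ℝ) ≤ P D) :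
    ((C.card:ℝ) + D.card) * (2*(2^n:ℝ) - (C.card + D.card))/(2^n:ℝ)
      ≤ P C + P D + ∑ y ∈ D \ C, dlt (deg C y) + ∑ y ∈ C \ D, dlt (deg D y) := by
  have hM0 : (0:ℝ) < (2^n:ℝ) := by positivity
  -- cardinality facts (in ℕ first)
  have hn1 : (D \ C).card + C.card ≤ 2^n := by
    rw [Finset.card_sdiff_add_card]
    rw [← card_univ_bool]
    exact card_le_card (subset_univ _)
  have hn2 : D.card ≤ (D \ C).card + C.card := by
    rw [Finset.card_sdiff_add_card]
    exact card_le_card subset_union_left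
  set M : ℝ := (2^n:ℝ) with hM
  set c : ℝ := (C.card:ℝ) with hc
  set d : ℝ := (D.card:ℝ) with hd
  set k : ℝ := ((D \ C).card:ℝ) with hk
  have hcM : c + k ≤ M := by
    rw [hc, hk, hM]
    have h : (((D \ C).card : ℕ) : ℝ) + ((C.card : ℕ) : ℝ) ≤ (((2:ℕ)^n : ℕ) : ℝ) := by
      exact_mod_cast hn1
    push_cast at h
    linarith
  have hdck : d - c ≤ k := by
    rw [hd, hc, hk]
    have h : ((D.card : ℕ) : ℝ) ≤ (((D \ C).card : ℕ) : ℝ) + ((C.card : ℕ) : ℝ) := by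
      exact_mod_cast hn2
    linarith
  have hdc0 : (0:ℝ) ≤ d - c := by
    rw [hd, hc]
    have h : ((C.card : ℕ) : ℝ) ≤ ((D.card : ℕ) : ℝ) := by exact_mod_cast hcd
    linarith
  have hk0 : (0:ℝ) ≤ k := by positivity
  have hc0 : (0:ℝ) ≤ c := by positivity
  -- E ≤ P C
  have hE : ∑ y ∈ D \ C, ((deg C y:ℝ))^β ≤ P C := by
    rw [P]
    apply Finset.sum_le_sum_of_subset_of_nonneg
    · intro y hy
      rw [mem_sdiff] at hy
      exact mem_sdiff.2 ⟨mem_univ _, hy.2⟩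
    · intro y _ _
      positivity
  have hG1 : (0:ℝ) ≤ ∑ y ∈ C \ D, dlt (deg D y) :=
    Finset.sum_nonneg (fun y _ => dlt_nonneg _)
  -- core
  have hcore := core (D \ C) (fun y => deg C y) hM0 hc0 hcM
  set G : ℝ := ∑ y ∈ D \ C, dlt (deg C y) with hG
  set E : ℝ := ∑ y ∈ D \ C, ((deg C y:ℝ))^β with hEE
  have hsum : ∑ y ∈ D \ C, ((deg C y:ℝ)+1)^β = E + G := by
    rw [hEE, hG, ← Finset.sum_add_distrib]
    apply Finset.sum_congr rfl
    intro y _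
    rw [show dlt (deg C y) = ((deg C y:ℝ)+1)^β - ((deg C y:ℝ))^β from rfl]
    ring
  rw [hsum] at hcore
  set φC : ℝ := 2*c*((2^n:ℝ)-c)/(2^n:ℝ) with hφC
  set φD : ℝ := 2*d*((2^n:ℝ)-d)/(2^n:ℝ) with hφD
  have hPCG : φC + k^2/M ≤ P C + G := by
    have h1 : max G (E + G - φC) + φC = max (G + φC) (E + G) := by
      rw [← max_add_add_right]
      congr 1
      ring
    have h3 : max (G + φC) (E + G) ≤ P C + G := by
      apply max_le
      · linarith [hC]
      · linarith [hE]
    have h2 : k^2/M ≤ max G (E + G - φC) := hcore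
    linarith
  have hsq : (d-c)^2 ≤ k^2 := by nlinarith
  have htarget : (c + d) * (2*M - (c+d))/M = φC + φD + (d-c)^2/M := by
    rw [hφC, hφD, ← hM]
    field_simp
    ring
  have hdiv : (d-c)^2/M ≤ k^2/M := by gcongr
  calc (c + d) * (2*M - (c+d))/M = φC + φD + (d-c)^2/M := htarget
  _ ≤ (P C + G) + P D + (0:ℝ) := by linarith [hPCG, hD, hdiv]
  _ ≤ P C + P D + G + ∑ y ∈ C \ D, dlt (deg D y) := by linarith [hG1]


lemma card_split (A : Finset (Fin (n+1) → Bool)) :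
    (A.card:ℝ) = ((half A false).card:ℝ) + ((half A true).card:ℝ) := by
  have h : ∀ (B : Finset (Fin (n+1) → Bool)), (B.card:ℝ) = ∑ x : Fin (n+1) → Bool, if x ∈ B then (1:ℝ) else 0 := by
    intro B
    rw [Finset.sum_boole]
    congr 1
    congr 1
    ext x
    simp
  have h2 : ∀ (B : Finset (Fin n → Bool)), (B.card:ℝ) = ∑ y : Fin n → Bool, if y ∈ B then (1:ℝ) else 0 := by
    intro B
    rw [Finset.sum_boole]
    congr 1
    congr 1
    ext x
    simp
  rw [h A, sum_cons_split (fun x => if x ∈ A then (1:ℝ) else 0), h2, h2]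
  congr 1
  · apply Finset.sum_congr rfl
    intro y _
    exact if_congr (by simp [mem_half]) rfl rfl
  · apply Finset.sum_congr rfl
    intro y _
    exact if_congr (by simp [mem_half]) rfl rfl

theorem isoperi (n : ℕ) (A : Finset (Fin n → Bool)) :
    2*(A.card:ℝ)*((2^n:ℝ) - A.card)/(2^n:ℝ) ≤ P A := by
  induction n with
  | zero =>
    have hcard : A.card ≤ 1 := by
      calc A.card ≤ (univ : Finset (Fin 0 → Bool)).card := card_le_card (subset_univ _)
      _ = 1 := by rw [card_univ_bool]; norm_num
    have hP : 0 ≤ P A := Finset.sum_nonneg (fun x _ => by positivity)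
    rcases Nat.le_one_iff_eq_zero_or_eq_one.mp hcard with h | h
    · rw [h]
      norm_num
      linarith
    · rw [h]
      norm_num
      linarith
  | succ n ih =>
    set C := half A false with hCdef
    set D := half A true with hDdef
    have hsplit := P_split A
    have hcards := card_split A
    rw [← hCdef, ← hDdef] at hsplit hcards
    rw [hsplit, hcards]
    have hM0 : (0:ℝ) < (2^n:ℝ) := by positivity
    have hident : ∀ s : ℝ, 2*s*((2^(n+1):ℝ) - s)/(2^(n+1):ℝ)
        = s * (2*(2^n:ℝ) - s)/(2^n:ℝ) := by
      intro s
      have h2 : ((2:ℝ)^(n+1)) = 2*(2^n:ℝ) := by ring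
      rw [h2]
      field_simp
    rw [hident]
    rcases le_total C.card D.card with hle | hle
    · exact keystep C D hle (ih C) (ih D)
    · have hks := keystep D C hle (ih D) (ih C)
      have e2 : ((C.card:ℝ) + D.card) * (2*(2^n:ℝ) - ((C.card:ℝ) + D.card))/(2^n:ℝ)
          = ((D.card:ℝ) + C.card) * (2*(2^n:ℝ) - ((D.card:ℝ) + C.card))/(2^n:ℝ) := by
        ring
      rw [e2]
      linarith [hks]


lemma nabla_eq_sum_deg (A B : Finset (Fin n → Bool)) :
    (nabla A B : ℝ) = ∑ x ∈ B, (deg A x : ℝ) := by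
  have key : ∀ i : Fin n,
      (∑ x ∈ A, if flipC x i ∈ B then (1:ℝ) else 0)
        = ∑ x ∈ B, if flipC x i ∈ A then (1:ℝ) else 0 := by
    intro i
    have hcard : (A.filter (fun x => flipC x i ∈ B)).card
        = (B.filter (fun x => flipC x i ∈ A)).card := by
      apply Finset.card_bij' (fun a _ => flipC a i) (fun a _ => flipC a i)
      · intro a ha
        rw [mem_filter] at ha ⊢
        exact ⟨ha.2, by rw [flipC_flip]; exact ha.1⟩
      · intro a ha
        rw [mem_filter] at ha ⊢
        exact ⟨ha.2, by rw [flipC_flip]; exact ha.1⟩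
      · intro a _
        exact flipC_flip a i
      · intro a _
        exact flipC_flip a i
    rw [Finset.sum_boole, Finset.sum_boole, hcard]
  have h1 : (nabla A B : ℝ) = ∑ x ∈ A, ∑ i : Fin n, if flipC x i ∈ B then (1:ℝ) else 0 := by
    rw [nabla]
    push_cast
    apply Finset.sum_congr rfl
    intro x _
    rw [card_filter]
    push_cast
    rfl
  have h2 : ∑ x ∈ B, (deg A x : ℝ) = ∑ x ∈ B, ∑ i : Fin n, if flipC x i ∈ A then (1:ℝ) else 0 := by
    apply Finset.sum_congr rfl
    intro x _
    rw [deg, card_filter]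
    push_cast
    rfl
  rw [h1, h2, Finset.sum_comm]
  rw [show (∑ x ∈ B, ∑ i : Fin n, if flipC x i ∈ A then (1:ℝ) else 0)
      = ∑ i : Fin n, ∑ x ∈ B, if flipC x i ∈ A then (1:ℝ) else 0 from Finset.sum_comm]
  exact Finset.sum_congr rfl (fun i _ => key i)

theorem cube_separation {n : ℕ} (A B W : Finset (Fin n → Bool))
    (hUnion : A ∪ B ∪ W = univ)
    (hAB : Disjoint A B) (hAW : Disjoint A W) (hBW : Disjoint B W)
    (hA : (A.card : ℝ) / 2 ^ n = 1/2) :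
    (nabla A B : ℝ) + (n : ℝ) ^ β * W.card ≥ 2 ^ n / 2 := by
  have hM0 : (0:ℝ) < (2^n:ℝ) := by positivity
  -- A's complement is B ∪ W
  have hcomp : univ \ A = B ∪ W := by
    rw [← hUnion]
    rw [Finset.union_assoc,
      Finset.union_sdiff_cancel_left (Finset.disjoint_union_right.2 ⟨hAB, hAW⟩)]
  -- pointwise bound on B
  have hB : ∑ x ∈ B, ((deg A x:ℝ))^β ≤ (nabla A B : ℝ) := by
    rw [nabla_eq_sum_deg]
    apply Finset.sum_le_sum
    intro x _
    rcases Nat.eq_zero_or_pos (deg A x) with h0 | h1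
    · rw [h0]
      push_cast
      rw [zero_rpow_beta]
    · calc ((deg A x:ℝ))^β ≤ ((deg A x:ℝ))^(1:ℝ) :=
            Real.rpow_le_rpow_of_exponent_le (by exact_mod_cast h1) beta_le_one
      _ = (deg A x:ℝ) := Real.rpow_one _
  -- pointwise bound on W
  have hW : ∑ x ∈ W, ((deg A x:ℝ))^β ≤ (n:ℝ)^β * W.card := by
    calc ∑ x ∈ W, ((deg A x:ℝ))^β ≤ ∑ x ∈ W, (n:ℝ)^β := by
          apply Finset.sum_le_sum
          intro x _
          apply Real.rpow_le_rpow (by positivity) _ beta_pos.le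
          exact_mod_cast deg_le A x
    _ = (n:ℝ)^β * W.card := by
          rw [Finset.sum_const, nsmul_eq_mul]
          ring
  -- isoperimetry
  have hcard : (A.card : ℝ) = (2^n:ℝ)/2 := by
    field_simp at hA
    linarith
  have hiso := isoperi n A
  rw [hcard] at hiso
  have hval : 2*((2^n:ℝ)/2)*((2^n:ℝ) - (2^n:ℝ)/2)/(2^n:ℝ) = (2^n:ℝ)/2 := by
    field_simp
    ring
  rw [hval] at hiso
  have hsum : P A = ∑ x ∈ B, ((deg A x:ℝ))^β + ∑ x ∈ W, ((deg A x:ℝ))^β := by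
    rw [P, hcomp, Finset.sum_union hBW]
  rw [ge_iff_le]
  rw [hsum] at hiso
  linarith

end CubeSeparationProof
end

section
/- (Edge-isoperimetric inequality, Harper–Lindsey form) For every A ⊆ {0,1}^n, |∇A| ≥ |A| log₂(2^n/|A|), with equality if A is a subcube. -/
open Finset

/-- `|∇A|`: the number of (ordered) boundary pairs `(x, xⁱ)` with `x ∈ A`, `xⁱ ∉ A`. -/
def edgeBoundary {n : ℕ} (A : Finset (Fin n → Bool)) : ℕ :=
  ∑ x ∈ A, (univ.filter (fun i => flipC x i ∉ A)).card

def IsSubcube {n : ℕ} (k : ℕ) (C : Finset (Fin n → Bool)) : Prop :=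
  ∃ (I : Finset (Fin n)) (z : Fin n → Bool), I.card = k ∧
    C = univ.filter (fun x => ∀ i ∈ I, x i = z i)

/-!
Induction on `n`, splitting `A` by the first coordinate into slices `A₀, A₁` of the
`(n-1)`-cube. The boundary of `A` consists of the boundaries of `A₀` and `A₁` plus the edges
in direction `0` leaving `A`, of which there are `|A₀ \ A₁| + |A₁ \ A₀| ≥ |a₀ - a₁|`. Since
`a log₂ (2ⁿ / a) = n a - a log₂ a`, the induction step reduces to the entropy inequality
`a log₂ a + b log₂ b + 2b ≤ (a + b) log₂ (a + b)` for `0 ≤ b ≤ a`, which follows from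
`log₂ (1 + t) ≥ t` on `[0, 1]` and `a + b ≥ 2b`. In a subcube fixing the coordinates `I`,
every point has exactly `|I|` boundary edges, so equality holds.
-/

open Real

lemma le_logb_two_one_add {t : ℝ} (h0 : 0 ≤ t) (h1 : t ≤ 1) : t ≤ logb 2 (1 + t) := by
  rw [le_logb_iff_rpow_le one_lt_two (by linarith)]
  simpa [one_add_one_eq_two] using rpow_one_add_le_one_add_mul_self (s := 1) (by norm_num) h0 h1

lemma mul_logb_add_mul_logb_add_le {a b : ℝ} (hb : 0 ≤ b) (hba : b ≤ a) :
    a * logb 2 a + b * logb 2 b + 2 * b ≤ (a + b) * logb 2 (a + b) := by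
  rcases eq_or_lt_of_le hb with rfl | hb
  · simp
  have ha : 0 < a := hb.trans_le hba
  have hlarge : a * logb 2 a + b ≤ a * logb 2 (a + b) := by
    have hsplit : a + b = a * (1 + b / a) := by field_simp
    have := mul_le_mul_of_nonneg_left
      (le_logb_two_one_add (div_nonneg hb.le ha.le) ((div_le_one ha).mpr hba)) ha.le
    rw [mul_div_cancel₀ _ ha.ne'] at this
    rw [hsplit, logb_mul ha.ne' (by positivity), mul_add]
    linarith
  have hsmall : b * logb 2 b + b ≤ b * logb 2 (a + b) := by
    have : logb 2 b + 1 ≤ logb 2 (a + b) := by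
      rw [← logb_self_eq_one one_lt_two, ← logb_mul hb.ne' two_ne_zero]
      exact (logb_le_logb one_lt_two (by positivity) (by linarith)).mpr (by linarith)
    linarith [mul_le_mul_of_nonneg_left this hb.le]
  linarith

lemma mul_logb_two_pow_div (m : ℕ) (a : ℝ) :
    a * logb 2 (2 ^ m / a) = m * a - a * logb 2 a := by
  rcases eq_or_ne a 0 with rfl | ha
  · simp
  · rw [logb_div (by positivity) ha, logb_pow, logb_self_eq_one one_lt_two]
    ring

lemma mul_logb_two_pow_succ_div_add_le (m : ℕ) {a b : ℝ} (ha : 0 ≤ a) (hb : 0 ≤ b) :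
    (a + b) * logb 2 (2 ^ (m + 1) / (a + b)) ≤
      a * logb 2 (2 ^ m / a) + b * logb 2 (2 ^ m / b) + |a - b| := by
  simp only [mul_logb_two_pow_div]
  push_cast
  rcases le_total b a with hba | hab
  · have := mul_logb_add_mul_logb_add_le hb hba
    rw [abs_of_nonneg (sub_nonneg.mpr hba)]
    linarith
  · have := mul_logb_add_mul_logb_add_le ha hab
    rw [abs_of_nonpos (sub_nonpos.mpr hab)]
    rw [add_comm b a] at this
    linarith

lemma abs_card_sub_card_le {α : Type*} [DecidableEq α] (s t : Finset α) :
    |(#s : ℝ) - #t| ≤ #(s \ t) + #(t \ s) := by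
  have hs : (#s : ℝ) ≤ #(s \ t) + #t := by exact_mod_cast card_le_card_sdiff_add_card
  have ht : (#t : ℝ) ≤ #(t \ s) + #s := by exact_mod_cast card_le_card_sdiff_add_card
  rw [abs_le]
  constructor <;> linarith

variable {n : ℕ}

def headSlice (A : Finset (Fin (n + 1) → Bool)) (b : Bool) : Finset (Fin n → Bool) :=
  {y | Fin.cons b y ∈ A}

@[simp]
lemma mem_headSlice {A : Finset (Fin (n + 1) → Bool)} {b : Bool} {y : Fin n → Bool} :
    y ∈ headSlice A b ↔ Fin.cons b y ∈ A := by
  simp [headSlice]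

lemma sum_eq_sum_headSlice {M : Type*} [AddCommMonoid M] (A : Finset (Fin (n + 1) → Bool))
    (f : (Fin (n + 1) → Bool) → M) :
    ∑ x ∈ A, f x = ∑ y ∈ headSlice A false, f (Fin.cons false y) +
      ∑ y ∈ headSlice A true, f (Fin.cons true y) := by
  rw [← sum_ite_mem_eq, ← (Fin.consEquiv fun _ => Bool).sum_comp, Fintype.sum_prod_type,
    Fintype.sum_bool, add_comm]
  simp only [headSlice, sum_filter]
  rfl

lemma card_eq_card_headSlice_add (A : Finset (Fin (n + 1) → Bool)) :
    #A = #(headSlice A false) + #(headSlice A true) := by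
  simpa only [card_eq_sum_ones] using sum_eq_sum_headSlice A fun _ => 1

lemma flipC_cons_zero (b : Bool) (y : Fin n → Bool) :
    flipC (Fin.cons b y : Fin (n + 1) → Bool) 0 = Fin.cons (!b) y := by
  rw [flipC, Fin.cons_zero, Fin.update_cons_zero]

lemma flipC_cons_succ (b : Bool) (y : Fin n → Bool) (i : Fin n) :
    flipC (Fin.cons b y : Fin (n + 1) → Bool) i.succ = Fin.cons b (flipC y i) := by
  rw [flipC, flipC, Fin.cons_succ, Fin.cons_update]

lemma card_flipC_cons_notMem (A : Finset (Fin (n + 1) → Bool)) (b : Bool) (y : Fin n → Bool) :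
    #{i | flipC (Fin.cons b y) i ∉ A} =
      (if Fin.cons (!b) y ∈ A then 0 else 1) + #{i | flipC y i ∉ headSlice A b} := by
  simp only [card_filter, Fin.sum_univ_succ, flipC_cons_zero, flipC_cons_succ, mem_headSlice]
  split_ifs <;> rfl

lemma card_headSlice_sdiff (A : Finset (Fin (n + 1) → Bool)) (b c : Bool) :
    #(headSlice A b \ headSlice A c) =
      ∑ y ∈ headSlice A b, if Fin.cons c y ∈ A then 0 else 1 := by
  simp only [sdiff_eq_filter, card_filter, mem_headSlice, ite_not]

lemma edgeBoundary_eq_headSlice (A : Finset (Fin (n + 1) → Bool)) :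
    edgeBoundary A = edgeBoundary (headSlice A false) + edgeBoundary (headSlice A true) +
      (#(headSlice A false \ headSlice A true) + #(headSlice A true \ headSlice A false)) := by
  rw [edgeBoundary, sum_eq_sum_headSlice]
  simp only [card_flipC_cons_notMem, sum_add_distrib, Bool.not_false, Bool.not_true,
    ← card_headSlice_sdiff, edgeBoundary]
  ring

theorem card_mul_logb_le_edgeBoundary (A : Finset (Fin n → Bool)) :
    #A * logb 2 (2 ^ n / #A) ≤ edgeBoundary A := by
  induction n with
  | zero =>
    have hA : #A ≤ 1 := by simpa using card_le_univ A
    interval_cases #A <;> simp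
  | succ n ih =>
    set A₀ := headSlice A false
    set A₁ := headSlice A true
    calc (#A : ℝ) * logb 2 (2 ^ (n + 1) / #A)
        = (#A₀ + #A₁ : ℝ) * logb 2 (2 ^ (n + 1) / (#A₀ + #A₁)) := by
          rw [card_eq_card_headSlice_add, Nat.cast_add]
      _ ≤ #A₀ * logb 2 (2 ^ n / #A₀) + #A₁ * logb 2 (2 ^ n / #A₁) +
            |(#A₀ : ℝ) - #A₁| :=
          mul_logb_two_pow_succ_div_add_le n (Nat.cast_nonneg _) (Nat.cast_nonneg _)
      _ ≤ edgeBoundary A₀ + edgeBoundary A₁ + (#(A₀ \ A₁) + #(A₁ \ A₀)) := by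
          gcongr
          exacts [ih A₀, ih A₁, abs_card_sub_card_le A₀ A₁]
      _ = edgeBoundary A := by
          rw [edgeBoundary_eq_headSlice]
          push_cast
          rfl

def subcube (I : Finset (Fin n)) (z : Fin n → Bool) : Finset (Fin n → Bool) :=
  {x | ∀ i ∈ I, x i = z i}

lemma subcube_eq_piFinset (I : Finset (Fin n)) (z : Fin n → Bool) :
    subcube I z = Fintype.piFinset fun i => if i ∈ I then {z i} else univ := by
  ext x
  simp only [subcube, mem_filter, mem_univ, true_and, Fintype.mem_piFinset]
  refine forall_congr' fun i => ?_
  split_ifs with hi <;> simp [hi]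

lemma card_subcube (I : Finset (Fin n)) (z : Fin n → Bool) :
    #(subcube I z) = 2 ^ (n - #I) := by
  rw [subcube_eq_piFinset, Fintype.card_piFinset]
  simp [apply_ite, prod_ite, filter_notMem_eq_sdiff, card_sdiff]

lemma flipC_mem_subcube_iff {I : Finset (Fin n)} {z x : Fin n → Bool}
    (hx : x ∈ subcube I z) (i : Fin n) : flipC x i ∈ subcube I z ↔ i ∉ I := by
  simp only [subcube, mem_filter, mem_univ, true_and] at hx ⊢
  constructor
  · intro hflip hi
    have := hflip i hi
    rw [flipC, Function.update_self, hx i hi] at this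
    exact Bool.not_ne_self _ this
  · intro hi j hj
    rw [flipC, Function.update_of_ne (ne_of_mem_of_not_mem hj hi), hx j hj]

lemma edgeBoundary_subcube (I : Finset (Fin n)) (z : Fin n → Bool) :
    edgeBoundary (subcube I z) = #(subcube I z) * #I := by
  refine sum_const_nat fun x hx => congrArg card ?_
  ext i
  simp [flipC_mem_subcube_iff hx]

lemma edgeBoundary_subcube_eq (I : Finset (Fin n)) (z : Fin n → Bool) :
    (edgeBoundary (subcube I z) : ℝ) =
      #(subcube I z) * logb 2 (2 ^ n / #(subcube I z)) := by
  have hI : #I ≤ n := by simpa using card_le_univ I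
  have hpow : (2 : ℝ) ^ n / 2 ^ (n - #I) = 2 ^ #I := by
    rw [div_eq_iff (by positivity), ← pow_add, Nat.add_sub_cancel' hI]
  rw [edgeBoundary_subcube, card_subcube]
  push_cast
  rw [hpow, logb_pow, logb_self_eq_one one_lt_two, mul_one]

theorem edge_isoperimetry {n : ℕ} (A : Finset (Fin n → Bool)) :
    (edgeBoundary A : ℝ) ≥ (A.card : ℝ) * Real.logb 2 (2 ^ n / (A.card : ℝ)) ∧
      (∀ k : ℕ, IsSubcube k A →
        (edgeBoundary A : ℝ) = (A.card : ℝ) * Real.logb 2 (2 ^ n / (A.card : ℝ))) := by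
  refine ⟨card_mul_logb_le_edgeBoundary A, ?_⟩
  rintro k ⟨I, z, -, rfl⟩
  exact edgeBoundary_subcube_eq I z
end
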